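/- arXiv:1906.03296 — 2 statements merged into one kernel-verified Lean document; each statement's English description precedes it below -/
import Mathlib

section
/- Let f be a quadratic form over K = GF(q²) whose zero set in PG(2,q²) is an F_{q²}-conic 𝒪, and let L̄ be a point of ℓ∞ with L̄ ∉ 𝒪. Then in PG(4,q²), the extended spread line [L]⋆ is disjoint from [𝒪]⋆. -/
open scoped Classical
open Matrix

noncomputable section

namespace BaerConics

/-- Points of the projective space `PG(n-1, K)` as projectivization of `Fin n → K`. -/
abbrev PP (K : Type) [Field K] (n : ℕ) : Type := Projectivization K (Fin n → K)

variable {K : Type} [Field K] {m n : ℕ}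

/-- The (at most one) projective point determined by a vector:  empty if `v = 0`,
and the singleton `{[v]}` otherwise. -/
def projPt (v : Fin n → K) : Set (PP K n) :=
  {p | ∃ h : v ≠ 0, p = Projectivization.mk K v h}

/-- The set of projective points lying in a linear subspace. -/
def ptsOf (W : Submodule K (Fin n → K)) : Set (PP K n) :=
  {p | p.rep ∈ W}

/-- The projective line through two points (as the set of points of the span). -/
def lineTh (P Q : PP K n) : Set (PP K n) :=
  ptsOf (Submodule.span K {P.rep, Q.rep})

/-- `X` is a projective flat of projective dimension `d`. -/
def IsFlat (d : ℕ) (X : Set (PP K n)) : Prop :=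
  ∃ W : Submodule K (Fin n → K), Module.finrank K W = d + 1 ∧ X = ptsOf W

/-- Image of a set of vectors under the projective map induced by a matrix. -/
def mimg (M : Matrix (Fin m) (Fin n) K) (X : Set (Fin n → K)) : Set (PP K m) :=
  {p | ∃ v ∈ X, p ∈ projPt (M.mulVec v)}

/-- Coordinatewise application of a ring homomorphism to a vector. -/
def mapVec {L : Type} [Field L] (σ : K →+* L) (v : Fin n → K) : Fin n → L :=
  fun i => σ (v i)

lemma mulVec_inj (M : Matrix (Fin n) (Fin n) K) (hM : IsUnit M.det) :
    Function.Injective M.mulVec := by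
  intro a b hab
  have h := congrArg (fun v => M⁻¹.mulVec v) hab
  simpa [Matrix.mulVec_mulVec, Matrix.nonsing_inv_mul M hM] using h

/-- The projective transformation induced by an invertible matrix. -/
def pmap (M : Matrix (Fin n) (Fin n) K) (hM : IsUnit M.det) (p : PP K n) : PP K n :=
  Projectivization.mk K (M.mulVec p.rep) (by
    intro h
    apply p.rep_nonzero
    have h0 : M.mulVec p.rep = M.mulVec 0 := by simpa [Matrix.mulVec_zero] using h
    exact mulVec_inj M hM h0)

/-- The map induced on projective points by the coordinatewise `q`-power map. -/
def frobPt (q : ℕ) (p : PP K n) : PP K n :=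
  Projectivization.mk K (fun i => p.rep i ^ q) (by
    obtain ⟨i, hi⟩ := Function.ne_iff.mp p.rep_nonzero
    intro h
    exact pow_ne_zero q (by simpa using hi) (by simpa using congrFun h i))

/-- The line at infinity `z = 0` of `PG(2, K)`. -/
def linf (K : Type) [Field K] : Set (PP K 3) := {p | p.rep 2 = 0}

/-- Coordinatewise application of the algebra map to a vector. -/
def algVec (F : Type) {K : Type} [Field F] [Field K] [Algebra F K] {n : ℕ}
    (v : Fin n → F) : Fin n → K := fun i => algebraMap F K (v i)

/-- Vectors representing the points of the standard Baer subline of `ℓ∞`. -/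
def sublineVecs (F K : Type) [Field F] [Field K] [Algebra F K] : Set (Fin 3 → K) :=
  {v | ∃ θ : F, v = ![algebraMap F K θ, 1, 0]} ∪ {![1, 0, 0]}

/-- Nonzero vectors representing the points of `ℓ∞`. -/
def linfVecs (K : Type) [Field K] : Set (Fin 3 → K) := {v | v ≠ 0 ∧ v 2 = 0}

/-- Vectors with all coordinates in (the image of) `F`, representing the canonical
Baer subplane. -/
def subplaneVecs (F K : Type) [Field F] [Field K] [Algebra F K] : Set (Fin 3 → K) :=
  {v | ∃ w : Fin 3 → F, w ≠ 0 ∧ v = algVec F w}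

/-- Vectors of the standard conic with parameters in `S`. -/
def conicVecs {K : Type} [Field K] (S : Set K) : Set (Fin 3 → K) :=
  {v | ∃ θ ∈ S, v = ![1, θ, θ ^ 2]} ∪ {![0, 0, 1]}

/-- `b` is a Baer subline of the line `ℓ` of `PG(2,q²)`. -/
def IsBaerSublineOf (F : Type) {K : Type} [Field F] [Field K] [Algebra F K]
    (b ℓ : Set (PP K 3)) : Prop :=
  ∃ M : Matrix (Fin 3) (Fin 3) K, IsUnit M.det ∧
    ℓ = mimg M (linfVecs K) ∧ b = mimg M (sublineVecs F K)

/-- `B` is a Baer subplane of `PG(2,q²)`. -/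
def IsBaerSubplane (F : Type) {K : Type} [Field F] [Field K] [Algebra F K]
    (B : Set (PP K 3)) : Prop :=
  ∃ M : Matrix (Fin 3) (Fin 3) K, IsUnit M.det ∧ B = mimg M (subplaneVecs F K)

/-- `C` is the image under `PGL(3,K)` of the standard conic with parameters in `S`. -/
def IsConicOver {K : Type} [Field K] (S : Set K) (C : Set (PP K 3)) : Prop :=
  ∃ M : Matrix (Fin 3) (Fin 3) K, IsUnit M.det ∧ C = mimg M (conicVecs S)

/-- An `F_q`-conic of `PG(2,q²)`: a nondegenerate conic of a Baer subplane. -/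
def IsFqConic (F : Type) {K : Type} [Field F] [Field K] [Algebra F K]
    (C : Set (PP K 3)) : Prop :=
  IsConicOver (Set.range (algebraMap F K)) C

/-- An `F_{q²}`-conic of `PG(2,q²)`: a nondegenerate conic. -/
def IsFq2Conic {K : Type} [Field K] (C : Set (PP K 3)) : Prop :=
  IsConicOver (Set.univ : Set K) C

/-- `𝒦` is an `ℓ∞`-Baer pencil with vertex `P`. -/
def IsLinfBaerPencil (F : Type) {K : Type} [Field F] [Field K] [Algebra F K]
    (𝒦 : Set (PP K 3)) (P : PP K 3) : Prop :=
  P ∈ linf K ∧ ∃ ℓ b : Set (PP K 3), IsBaerSublineOf F b ℓ ∧ P ∉ ℓ ∧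
    (∃! X, X ∈ b ∩ linf K) ∧ 𝒦 = ⋃ X ∈ b, lineTh P X

/-- `m` is a line of the Baer subplane `B`, with extension (full line) `ℓ`. -/
def IsLineOfExt {K : Type} [Field K] (q : ℕ) (B m ℓ : Set (PP K 3)) : Prop :=
  IsFlat 1 ℓ ∧ m = B ∩ ℓ ∧ m.ncard = q + 1

/-- `m` is a line of the Baer subplane `B`. -/
def IsLineOf {K : Type} [Field K] (q : ℕ) (B m : Set (PP K 3)) : Prop :=
  ∃ ℓ, IsLineOfExt q B m ℓ

/-- `P` and `Q` are conjugate with respect to the Baer subline `b` of `ℓ∞`. -/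
def ConjWrtSubline (F : Type) {K : Type} [Field F] [Field K] [Algebra F K]
    (q : ℕ) (b : Set (PP K 3)) (P Q : PP K 3) : Prop :=
  ∃ (M : Matrix (Fin 3) (Fin 3) K) (hM : IsUnit M.det),
    mimg M (linfVecs K) = linf K ∧ b = mimg M (sublineVecs F K) ∧
    ∃ P₀ : PP K 3, P = pmap M hM P₀ ∧ Q = pmap M hM (frobPt q P₀)

/-- A representative vector for the point `(δ,1,0)` (resp. `(1,0,0)`) of `ℓ∞`. -/
def ptInfVec {K : Type} [Field K] : Option K → Fin 3 → K
  | some δ => ![δ, 1, 0]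
  | none => ![1, 0, 0]

lemma ptInfVec_ne {K : Type} [Field K] (t : Option K) : ptInfVec t ≠ 0 := by
  cases t with
  | none => intro h; have h0 := congrFun h 0; simp [ptInfVec] at h0
  | some δ => intro h; have h0 := congrFun h 1; simp [ptInfVec] at h0

/-- The point of `ℓ∞` with parameter `δ ∈ K ∪ {∞}`. -/
def ptInf {K : Type} [Field K] (t : Option K) : PP K 3 :=
  Projectivization.mk K (ptInfVec t) (ptInfVec_ne t)

/-- The hyperplane at infinity `z = 0` of `PG(4, F)`. -/
def sinf (F : Type) [Field F] : Set (PP F 5) := {p | p.rep 4 = 0}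

/-- Affine coordinates of the Bruck-Bose image of an affine point of `PG(2,q²)`. -/
def bbVec {F K : Type} [Field F] [Field K] (c0 c1 : K → F) (p : PP K 3) : Fin 5 → F :=
  ![c0 (p.rep 0 / p.rep 2), c1 (p.rep 0 / p.rep 2),
    c0 (p.rep 1 / p.rep 2), c1 (p.rep 1 / p.rep 2), 1]

/-- The Bruck-Bose map (meaningful on affine points of `PG(2,q²)`). -/
def bb {F K : Type} [Field F] [Field K] (c0 c1 : K → F) (p : PP K 3) : PP F 5 :=
  Projectivization.mk F (bbVec c0 c1 p) (by
    intro h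
    have h4 := congrFun h 4
    simp [bbVec] at h4)

/-- First spanning vector of the spread line with parameter `δ ∈ K ∪ {∞}`. -/
def spreadV1 {F K : Type} [Field F] [Field K] (c0 c1 : K → F) : Option K → Fin 5 → F
  | some δ => ![c0 δ, c1 δ, 1, 0, 0]
  | none => ![1, 0, 0, 0, 0]

/-- Second spanning vector of the spread line with parameter `δ ∈ K ∪ {∞}`. -/
def spreadV2 {F K : Type} [Field F] [Field K] (c0 c1 : K → F) (t0 t1 : F) :
    Option K → Fin 5 → F
  | some δ => ![t0 * c1 δ, c0 δ + t1 * c1 δ, 0, 1, 0]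
  | none => ![0, 1, 0, 0, 0]

/-- The line of the regular spread `S` with parameter `δ ∈ K ∪ {∞}`. -/
def spreadLine {F K : Type} [Field F] [Field K] (c0 c1 : K → F) (t0 t1 : F)
    (t : Option K) : Set (PP F 5) :=
  ptsOf (Submodule.span F {spreadV1 c0 c1 t, spreadV2 c0 c1 t0 t1 t})

/-- The extension `[T]⋆` of a spread line to `PG(4,q²)`. -/
def extSpreadLine (F : Type) {K : Type} [Field F] [Field K] [Algebra F K]
    (c0 c1 : K → F) (t0 t1 : F) (t : Option K) : Set (PP K 5) :=
  ptsOf (Submodule.span K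
    {algVec F (spreadV1 c0 c1 t), algVec F (spreadV2 c0 c1 t0 t1 t)})

/-- The `K`-extension of an `F`-subspace. -/
def extSub (F : Type) {K : Type} [Field F] [Field K] [Algebra F K] {n : ℕ}
    (W : Submodule F (Fin n → F)) : Submodule K (Fin n → K) :=
  Submodule.span K (algVec F '' (W : Set (Fin n → F)))

def A0v {K : Type} [Field K] (τ : K) (q : ℕ) : Fin 5 → K := ![τ ^ q, -1, 0, 0, 0]
def A1v {K : Type} [Field K] (τ : K) (q : ℕ) : Fin 5 → K := ![0, 0, τ ^ q, -1, 0]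
def B0v {K : Type} [Field K] (τ : K) : Fin 5 → K := ![τ, -1, 0, 0, 0]
def B1v {K : Type} [Field K] (τ : K) : Fin 5 → K := ![0, 0, τ, -1, 0]

/-- The transversal line `g` of the regular spread, in `PG(4,q²)`. -/
def gline {K : Type} [Field K] (τ : K) (q : ℕ) : Set (PP K 5) :=
  ptsOf (Submodule.span K {A0v τ q, A1v τ q})

/-- The conjugate transversal line `g^q` of the regular spread, in `PG(4,q²)`. -/
def gqline {K : Type} [Field K] (τ : K) : Set (PP K 5) :=
  ptsOf (Submodule.span K {B0v τ, B1v τ})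

/-- Representative vector of the point `T = δA₀ + A₁` of `g`. -/
def gptVec {K : Type} [Field K] (τ : K) (q : ℕ) : Option K → Fin 5 → K
  | some δ => δ • A0v τ q + A1v τ q
  | none => A0v τ q

/-- Representative vector of the conjugate point `T^q = δ^q A₀^q + A₁^q` of `g^q`. -/
def gqptVec {K : Type} [Field K] (τ : K) (q : ℕ) : Option K → Fin 5 → K
  | some δ => δ ^ q • B0v τ + B1v τ
  | none => B0v τ

lemma gptVec_ne {K : Type} [Field K] (τ : K) (q : ℕ) (t : Option K) :
    gptVec τ q t ≠ 0 := by
  cases t with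
  | none =>
      intro h
      have := congrFun h 1
      simp [gptVec, A0v] at this
  | some δ =>
      intro h
      have := congrFun h 3
      simp [gptVec, A0v, A1v] at this

lemma gqptVec_ne {K : Type} [Field K] (τ : K) (q : ℕ) (t : Option K) :
    gqptVec τ q t ≠ 0 := by
  cases t with
  | none =>
      intro h
      have := congrFun h 1
      simp [gqptVec, B0v] at this
  | some δ =>
      intro h
      have := congrFun h 3
      simp [gqptVec, B0v, B1v] at this

/-- The point of `g` corresponding to the point of `ℓ∞` with parameter `δ ∈ K ∪ {∞}`. -/
def gpt {K : Type} [Field K] (τ : K) (q : ℕ) (t : Option K) : PP K 5 :=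
  Projectivization.mk K (gptVec τ q t) (gptVec_ne τ q t)

/-- The point of `g^q` conjugate to `gpt τ q t`. -/
def gqpt {K : Type} [Field K] (τ : K) (q : ℕ) (t : Option K) : PP K 5 :=
  Projectivization.mk K (gqptVec τ q t) (gqptVec_ne τ q t)

/-- Evaluation of the quadratic form with matrix `M` at `v`. -/
def qeval {K : Type} [Field K] {n : ℕ} (M : Matrix (Fin n) (Fin n) K) (v : Fin n → K) : K :=
  v ⬝ᵥ M.mulVec v

/-- Vectors of the standard twisted cubic (inside the hyperplane `x₄ = 0`)
with parameters in `S`. -/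
def tcVecs {K : Type} [Field K] (S : Set K) : Set (Fin 5 → K) :=
  {v | ∃ θ ∈ S, v = ![1, θ, θ ^ 2, θ ^ 3, 0]} ∪ {![0, 0, 0, 1, 0]}

/-- Vectors of the standard 4-dimensional normal rational curve with parameters in `S`. -/
def nrcVecs {K : Type} [Field K] (S : Set K) : Set (Fin 5 → K) :=
  {v | ∃ θ ∈ S, v = ![1, θ, θ ^ 2, θ ^ 3, θ ^ 4]} ∪ {![0, 0, 0, 0, 1]}

/-- `R` is a regulus of `Σ∞` in `PG(4,q)`. -/
def IsRegulus {F : Type} [Field F] (q : ℕ) (R : Set (Set (PP F 5))) : Prop :=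
  R.ncard = q + 1 ∧
  (∀ ℓ ∈ R, IsFlat 1 ℓ ∧ ℓ ⊆ sinf F) ∧
  (∀ ℓ ∈ R, ∀ ℓ' ∈ R, ℓ ≠ ℓ' → ℓ ∩ ℓ' = ∅) ∧
  (∀ mℓ : Set (PP F 5), IsFlat 1 mℓ → mℓ ⊆ sinf F →
    (∃ ℓ₁ ∈ R, ∃ ℓ₂ ∈ R, ∃ ℓ₃ ∈ R, ℓ₁ ≠ ℓ₂ ∧ ℓ₁ ≠ ℓ₃ ∧ ℓ₂ ≠ ℓ₃ ∧
      (mℓ ∩ ℓ₁).Nonempty ∧ (mℓ ∩ ℓ₂).Nonempty ∧ (mℓ ∩ ℓ₃).Nonempty) →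
    ∀ ℓ ∈ R, (mℓ ∩ ℓ).Nonempty)


/-- The Bruck-Bose substitution `(x₀,x₁,y₀,y₁,z) ↦ (x₀+x₁τ, y₀+y₁τ, z)`. -/
def bbSubst (F : Type) {K : Type} [Field F] [Field K] [Algebra F K] (τ : K)
    (v : Fin 5 → F) : Fin 3 → K :=
  ![algebraMap F K (v 0) + algebraMap F K (v 1) * τ,
    algebraMap F K (v 2) + algebraMap F K (v 3) * τ,
    algebraMap F K (v 4)]


/-!
A point of `[L]⋆` is `a • v₁ + b • v₂` with `a, b ∈ K`, where `v₁, v₂` span `[L]` and the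
Bruck–Bose substitution maps `α v₁ + β v₂` (`α, β ∈ F`) to `(α + βτ) L̄`. Hence `f∞` and `f₀`
restricted to `[L]` are the coordinates, in the basis `1, τ`, of `(α + βτ)² f(L̄)`, and the
same binary quadratic forms describe them on `[L]⋆`. A common zero forces first `a + bτ = 0`
(as `f(L̄) ≠ 0`), and then, evaluating at `(-τ, 1)` and using that `τ` is a simple root of its
minimal polynomial, `f(L̄) = 0`.
-/

lemma qeval_smul (A : Matrix (Fin n) (Fin n) K) (c : K) (x : Fin n → K) :
    qeval A (c • x) = c ^ 2 * qeval A x := by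
  simp only [qeval, Matrix.mulVec_smul, dotProduct_smul, smul_dotProduct, smul_eq_mul]
  ring

lemma qeval_smul_add_smul (A : Matrix (Fin n) (Fin n) K) (a b : K) (x y : Fin n → K) :
    qeval A (a • x + b • y) =
      a ^ 2 * qeval A x + a * b * (qeval A (x + y) - qeval A x - qeval A y)
        + b ^ 2 * qeval A y := by
  simp only [qeval, Matrix.mulVec_add, Matrix.mulVec_smul, dotProduct_add,
    add_dotProduct, dotProduct_smul, smul_dotProduct, smul_eq_mul]
  ring

lemma qeval_rep_mk_eq_zero_iff (A : Matrix (Fin n) (Fin n) K) {v : Fin n → K} (hv : v ≠ 0) :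
    qeval A (Projectivization.mk K v hv).rep = 0 ↔ qeval A v = 0 := by
  obtain ⟨c, hc⟩ := (Projectivization.mk_eq_mk_iff K _ _ _ _).mp
    (Projectivization.mk_rep (Projectivization.mk K v hv))
  rw [← hc, Units.smul_def, qeval_smul, mul_eq_zero, or_iff_right (pow_ne_zero 2 c.ne_zero)]

section Extension

variable {F : Type} [Field F] [Algebra F K]

lemma algVec_add (v w : Fin n → F) : algVec F (v + w) = (algVec F v : Fin n → K) + algVec F w := by
  funext i
  simp [algVec]

lemma qeval_map_algVec (A : Matrix (Fin n) (Fin n) F) (v : Fin n → F) :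
    qeval (A.map (algebraMap F K)) (algVec F v) = algebraMap F K (qeval A v) := by
  simp [qeval, dotProduct, Matrix.mulVec, algVec, map_sum]

/-- A quadratic form is determined on a plane by its values at `x`, `y` and `x + y`, so a formula
for it on the `F`-span of `x, y` persists on the `K`-span. -/
lemma qeval_map_smul_add_smul_algVec {A : Matrix (Fin n) (Fin n) F} {x y : Fin n → F}
    {c₁ c₂ c₃ : F} (h : ∀ α β : F, qeval A (α • x + β • y) = c₁ * α ^ 2 + c₂ * α * β + c₃ * β ^ 2)
    (a b : K) :
    qeval (A.map (algebraMap F K)) (a • algVec F x + b • algVec F y) =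
      algebraMap F K c₁ * a ^ 2 + algebraMap F K c₂ * a * b + algebraMap F K c₃ * b ^ 2 := by
  have hx : qeval A x = c₁ := by simpa using h 1 0
  have hy : qeval A y = c₃ := by simpa using h 0 1
  have hxy : qeval A (x + y) = c₁ + c₂ + c₃ := by simpa using h 1 1
  rw [qeval_smul_add_smul, ← algVec_add, qeval_map_algVec, qeval_map_algVec, qeval_map_algVec,
    hx, hy, hxy, map_add, map_add]
  ring

end Extension

section QuadraticExtension

variable {F : Type} [Field F] [Algebra F K] {τ : K} {t0 t1 : F}

lemma algebraMap_add_mul_inj (hτF : τ ∉ Set.range (algebraMap F K)) {a b a' b' : F}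
    (h : algebraMap F K a + algebraMap F K b * τ = algebraMap F K a' + algebraMap F K b' * τ) :
    a = a' ∧ b = b' := by
  have hb : b = b' := by
    by_contra hb
    have hbK : algebraMap F K (b' - b) ≠ 0 := (map_ne_zero _).mpr (sub_ne_zero.mpr (Ne.symm hb))
    refine hτF ⟨(a - a') / (b' - b), ?_⟩
    rw [map_div₀, div_eq_iff hbK, map_sub, map_sub]
    linear_combination h
  refine ⟨?_, hb⟩
  rw [hb, add_left_inj] at h
  exact (algebraMap F K).injective h

/-- `τ` differs from its conjugate `t1 - τ`; in characteristic `2` this needs `F` perfect. -/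
lemma algebraMap_ne_two_mul [Finite F]
    (hτ : τ ^ 2 = algebraMap F K t1 * τ + algebraMap F K t0)
    (hτF : τ ∉ Set.range (algebraMap F K)) : algebraMap F K t1 ≠ 2 * τ := by
  intro h
  by_cases h2 : (2 : F) = 0
  · have := CharTwo.of_one_ne_zero_of_two_eq_zero one_ne_zero h2
    have h2K : (2 : K) = 0 := by rw [← map_ofNat (algebraMap F K) 2, h2, map_zero]
    obtain ⟨x, hx⟩ := isSquare_of_charTwo' t0
    have hxK : algebraMap F K t0 = algebraMap F K x * algebraMap F K x := by
      rw [hx, map_mul]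
    have hsq : (τ - algebraMap F K x) ^ 2 = 0 := by
      linear_combination hτ + τ * h + hxK +
        (τ ^ 2 - τ * algebraMap F K x + algebraMap F K x ^ 2) * h2K
    exact hτF ⟨x, (sub_eq_zero.mp (pow_eq_zero_iff two_ne_zero |>.mp hsq)).symm⟩
  · have h2K : (2 : K) ≠ 0 := by
      rw [← map_ofNat (algebraMap F K) 2]
      exact (map_ne_zero _).mpr h2
    refine hτF ⟨t1 / 2, ?_⟩
    rw [map_div₀, map_ofNat, h]
    field_simp

lemma algebraMap_add_mul_eq_zero_of_forms_eq_zero [Finite F]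
    (hτ : τ ^ 2 = algebraMap F K t1 * τ + algebraMap F K t0)
    (hτF : τ ∉ Set.range (algebraMap F K)) {u w : F} {a b : K} (hab : a ≠ 0 ∨ b ≠ 0)
    (hA : algebraMap F K u * a ^ 2 + algebraMap F K (2 * t0 * w) * a * b +
      algebraMap F K (t0 * (u + t1 * w)) * b ^ 2 = 0)
    (hB : algebraMap F K w * a ^ 2 + algebraMap F K (2 * (u + t1 * w)) * a * b +
      algebraMap F K (t1 * u + t0 * w + t1 ^ 2 * w) * b ^ 2 = 0) :
    algebraMap F K u + algebraMap F K w * τ = 0 := by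
  have hsep := sub_ne_zero.mpr (algebraMap_ne_two_mul hτ hτF)
  simp only [map_mul, map_add, map_pow, map_ofNat] at hA hB
  set U := algebraMap F K u
  set W := algebraMap F K w
  set T0 := algebraMap F K t0
  set T1 := algebraMap F K t1
  by_contra hc
  have hsq : (a + b * τ) ^ 2 * (U + W * τ) = 0 := by
    linear_combination hA + τ * hB + (b ^ 2 * (U + W * τ) + (2 * a * b + T1 * b ^ 2) * W) * hτ
  have ha : a = -(b * τ) :=
    eq_neg_of_add_eq_zero_left (pow_eq_zero_iff two_ne_zero |>.mp
      ((mul_eq_zero.mp hsq).resolve_right hc))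
  subst ha
  have hb : b ≠ 0 := by rintro rfl; simp at hab
  have hbsep : b ^ 2 * (T1 - 2 * τ) ≠ 0 := mul_ne_zero (pow_ne_zero 2 hb) hsep
  have hA' : b ^ 2 * (T1 - 2 * τ) * (T0 * W - τ * U) = 0 := by
    linear_combination hA + b ^ 2 * U * hτ
  have hB' : b ^ 2 * (T1 - 2 * τ) * (U + T1 * W - W * τ) = 0 := by
    linear_combination hB + b ^ 2 * W * hτ
  have hu : u = 0 := (algebraMap_add_mul_inj (a := t0 * w) (b := 0) (a' := 0) hτF (by
    rw [map_mul, map_zero]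
    linear_combination (mul_eq_zero.mp hA').resolve_left hbsep)).2.symm
  have hw : w = 0 := (algebraMap_add_mul_inj (a := u + t1 * w) (b := 0) (a' := 0) hτF (by
    rw [map_add, map_mul, map_zero]
    linear_combination (mul_eq_zero.mp hB').resolve_left hbsep)).2.symm
  simp [U, W, hu, hw] at hc

end QuadraticExtension

section SpreadLine

variable {F : Type} [Field F] [Algebra F K] {τ : K} {t0 t1 : F} {c0 c1 : K → F}

lemma bbSubst_smul_add_smul (α β : F) (v w : Fin 5 → F) :
    bbSubst F τ (α • v + β • w) =
      algebraMap F K α • bbSubst F τ v + algebraMap F K β • bbSubst F τ w := by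
  funext i
  fin_cases i <;> simp [bbSubst, Algebra.smul_def] <;> ring

lemma bbSubst_spreadV1 (hc : ∀ x : K, x = algebraMap F K (c0 x) + algebraMap F K (c1 x) * τ)
    (t : Option K) : bbSubst F τ (spreadV1 c0 c1 t) = ptInfVec t := by
  funext i
  cases t with
  | none => fin_cases i <;> simp [bbSubst, spreadV1, ptInfVec]
  | some δ => fin_cases i <;> simp [bbSubst, spreadV1, ptInfVec, ← hc δ]

lemma bbSubst_spreadV2 (hτ : τ ^ 2 = algebraMap F K t1 * τ + algebraMap F K t0)
    (hc : ∀ x : K, x = algebraMap F K (c0 x) + algebraMap F K (c1 x) * τ) (t : Option K) :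
    bbSubst F τ (spreadV2 c0 c1 t0 t1 t) = τ • ptInfVec t := by
  funext i
  cases t with
  | none => fin_cases i <;> simp [bbSubst, spreadV2, ptInfVec]
  | some δ =>
    fin_cases i
    · show algebraMap F K (t0 * c1 δ) + algebraMap F K (c0 δ + t1 * c1 δ) * τ = τ * δ
      rw [map_mul, map_add, map_mul]
      linear_combination (-τ) * hc δ - algebraMap F K (c1 δ) * hτ
    all_goals simp [bbSubst, spreadV2, ptInfVec]

/-- On `[L]`, the forms `f∞` and `f₀` are the coordinates of `(α + βτ)² f(L̄)` in the basis
`1, τ`. -/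
lemma qeval_spreadV_smul_add_smul (hτ : τ ^ 2 = algebraMap F K t1 * τ + algebraMap F K t0)
    (hτF : τ ∉ Set.range (algebraMap F K))
    (hc : ∀ x : K, x = algebraMap F K (c0 x) + algebraMap F K (c1 x) * τ)
    {M : Matrix (Fin 3) (Fin 3) K} {Minf M0 : Matrix (Fin 5) (Fin 5) F}
    (hdec : ∀ v : Fin 5 → F, qeval M (bbSubst F τ v) =
      algebraMap F K (qeval Minf v) + algebraMap F K (qeval M0 v) * τ)
    {t : Option K} {u w : F}
    (huw : qeval M (ptInfVec t) = algebraMap F K u + algebraMap F K w * τ) (α β : F) :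
    qeval Minf (α • spreadV1 c0 c1 t + β • spreadV2 c0 c1 t0 t1 t) =
        u * α ^ 2 + 2 * t0 * w * α * β + t0 * (u + t1 * w) * β ^ 2 ∧
      qeval M0 (α • spreadV1 c0 c1 t + β • spreadV2 c0 c1 t0 t1 t) =
        w * α ^ 2 + 2 * (u + t1 * w) * α * β + (t1 * u + t0 * w + t1 ^ 2 * w) * β ^ 2 := by
  have h := hdec (α • spreadV1 c0 c1 t + β • spreadV2 c0 c1 t0 t1 t)
  rw [bbSubst_smul_add_smul, bbSubst_spreadV1 hc, bbSubst_spreadV2 hτ hc, smul_smul, ← add_smul,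
    qeval_smul, mul_comm _ τ, huw] at h
  refine algebraMap_add_mul_inj hτF (h.symm.trans ?_)
  simp only [map_add, map_mul, map_pow, map_ofNat]
  linear_combination (algebraMap F K β ^ 2 * (algebraMap F K u + algebraMap F K w * τ) +
    (2 * algebraMap F K α * algebraMap F K β + algebraMap F K t1 * algebraMap F K β ^ 2) *
      algebraMap F K w) * hτ

end SpreadLine

theorem statement_11_general
    {F K : Type} [Field F] [Field K] [Fintype F] [Algebra F K]
    (τ : K) (t0 t1 : F)
    (hτ : τ ^ 2 = algebraMap F K t1 * τ + algebraMap F K t0)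
    (hτF : τ ∉ Set.range (algebraMap F K))
    (c0 c1 : K → F)
    (hc : ∀ x : K, x = algebraMap F K (c0 x) + algebraMap F K (c1 x) * τ)
    (M : Matrix (Fin 3) (Fin 3) K)
    (Minf M0 : Matrix (Fin 5) (Fin 5) F)
    (hdec : ∀ v : Fin 5 → F, qeval M (bbSubst F τ v) =
      algebraMap F K (qeval Minf v) + algebraMap F K (qeval M0 v) * τ)
    (tL : Option K) (hnot : ptInf tL ∉ {p : PP K 3 | qeval M p.rep = 0}) :
    extSpreadLine F c0 c1 t0 t1 tL ∩
      {p : PP K 5 | qeval (Minf.map (algebraMap F K)) p.rep = 0 ∧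
        qeval (M0.map (algebraMap F K)) p.rep = 0} = ∅ := by
  rw [Set.eq_empty_iff_forall_notMem]
  rintro p ⟨hp, hinf, h0⟩
  obtain ⟨a, b, hab⟩ := Submodule.mem_span_pair.mp hp
  obtain ⟨u, w, huw⟩ : ∃ u w : F,
      qeval M (ptInfVec tL) = algebraMap F K u + algebraMap F K w * τ := ⟨_, _, hc _⟩
  have hforms := qeval_spreadV_smul_add_smul hτ hτF hc hdec huw
  rw [← hab, qeval_map_smul_add_smul_algVec (fun α β => (hforms α β).1)] at hinf
  rw [← hab, qeval_map_smul_add_smul_algVec (fun α β => (hforms α β).2)] at h0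
  have hab0 : a ≠ 0 ∨ b ≠ 0 := by
    by_contra! h
    exact p.rep_nonzero (by rw [← hab, h.1, h.2, zero_smul, zero_smul, add_zero])
  exact hnot <| (qeval_rep_mk_eq_zero_iff M (ptInfVec_ne tL)).mpr <|
    huw.trans (algebraMap_add_mul_eq_zero_of_forms_eq_zero hτ hτF hab0 hinf h0)

/-- If `L̄ ∈ ℓ∞` does not lie on a nondegenerate conic `𝒪`, then in `PG(4,q²)` the
extended spread line `[L]⋆` is disjoint from `[𝒪]⋆`. -/
theorem statement_11
    {F K : Type} [Field F] [Field K] [Fintype F] [Fintype K] [Algebra F K]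
    (q : ℕ) (hq : Fintype.card F = q) (hK : Fintype.card K = q ^ 2)
    (τ : K) (t0 t1 : F)
    (hτ : τ ^ 2 = algebraMap F K t1 * τ + algebraMap F K t0)
    (hτF : τ ∉ Set.range (algebraMap F K))
    (c0 c1 : K → F)
    (hc : ∀ x : K, x = algebraMap F K (c0 x) + algebraMap F K (c1 x) * τ)
    (M : Matrix (Fin 3) (Fin 3) K)
    (hO : IsFq2Conic {p : PP K 3 | qeval M p.rep = 0})
    (Minf M0 : Matrix (Fin 5) (Fin 5) F)
    (hdec : ∀ v : Fin 5 → F, qeval M (bbSubst F τ v) =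
      algebraMap F K (qeval Minf v) + algebraMap F K (qeval M0 v) * τ)
    (tL : Option K) (hnot : ptInf tL ∉ {p : PP K 3 | qeval M p.rep = 0}) :
    extSpreadLine F c0 c1 t0 t1 tL ∩
      {p : PP K 5 | qeval (Minf.map (algebraMap F K)) p.rep = 0 ∧
        qeval (M0.map (algebraMap F K)) p.rep = 0} = ∅ :=
  statement_11_general τ t0 t1 hτ hτF c0 c1 hc M Minf M0 hdec tL hnot

end BaerConics
end
end

section
/- Let F = GF(7), K = GF(49), and f(x₀,x₁,x₂,x₃,x₄) = −x₀x₁ − x₃² + x₂x₄ + x₃x₄. Then f(1,θ,θ²,θ³,θ⁴) = 0 for all θ ∈ F and f(0,0,0,0,1) = 0, so the standard 4-dimensional normal rational curve {(1,θ,θ²,θ³,θ⁴) : θ ∈ F} ∪ {(0,0,0,0,1)} of PG(4,7) is contained in the quadric f = 0; however, for every τ ∈ K ∖ F one has f(1,τ,τ²,τ³,τ⁴) = τ⁷ − τ ≠ 0, so the extension of this curve to PG(4,49) is not contained in the extended quadric. Hence the bound q > 7 in the quadric-extension lemma for normal rational curves is tight. -/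
open scoped Classical
open Matrix

noncomputable section

namespace BaerConics

variable {K : Type} [Field K] {m n : ℕ}

/-- The quadratic form `f = −x₀x₁ − x₃² + x₂x₄ + x₃x₄`. -/
def exForm {R : Type} [CommRing R] (v : Fin 5 → R) : R :=
  -(v 0 * v 1) - v 3 ^ 2 + v 2 * v 4 + v 3 * v 4

/- Along the standard normal rational curve the form restricts to `t ↦ t⁷ − t`, which vanishes
exactly on `GF(7)`: every root of `X^q − X` in an extension of `GF(q)` already lies in `GF(q)`,
since the `q` elements of `GF(q)` exhaust its roots. -/

theorem exForm_nrc {R : Type} [CommRing R] (t : R) :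
    exForm ![1, t, t ^ 2, t ^ 3, t ^ 4] = t ^ 7 - t := by
  simp only [exForm, Matrix.cons_val]
  ring

open Polynomial in
theorem mem_range_algebraMap_of_pow_card_eq_self {F L : Type} [Field F] [Fintype F] [Field L]
    [Algebra F L] {t : L} (ht : t ^ Fintype.card F = t) :
    t ∈ Set.range (algebraMap F L) := by
  set P : F[X] := X ^ Fintype.card F - X
  have hcard : Multiset.card P.roots = P.natDegree := by
    rw [FiniteField.roots_X_pow_card_sub_X,
      FiniteField.X_pow_card_sub_X_natDegree_eq F Fintype.one_lt_card]
    rfl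
  have hP : P.map (algebraMap F L) ≠ 0 :=
    (Polynomial.map_ne_zero_iff (algebraMap F L).injective).mpr
      (FiniteField.X_pow_card_sub_X_ne_zero F Fintype.one_lt_card)
  have hroot : t ∈ (P.map (algebraMap F L)).roots := by
    rw [mem_roots hP]
    simp [P, ht]
  rw [← roots_map_of_injective_of_card_eq_natDegree (algebraMap F L).injective hcard] at hroot
  obtain ⟨a, -, rfl⟩ := Multiset.mem_map.mp hroot
  exact ⟨a, rfl⟩

theorem statement_14_general {K : Type} [Field K] [Algebra (ZMod 7) K] :
    (∀ θ : ZMod 7, exForm ![1, θ, θ ^ 2, θ ^ 3, θ ^ 4] = 0) ∧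
    exForm (![0, 0, 0, 0, 1] : Fin 5 → ZMod 7) = 0 ∧
    (∀ t : K, t ∉ Set.range (algebraMap (ZMod 7) K) →
      exForm ![1, t, t ^ 2, t ^ 3, t ^ 4] = t ^ 7 - t ∧ t ^ 7 - t ≠ 0) := by
  have : Fact (Nat.Prime 7) := ⟨by norm_num⟩
  refine ⟨fun θ => ?_, by simp [exForm], fun t ht => ⟨exForm_nrc t, ?_⟩⟩
  · rw [exForm_nrc, ZMod.pow_card, sub_self]
  · refine sub_ne_zero.mpr fun h => ht (mem_range_algebraMap_of_pow_card_eq_self ?_)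
    rwa [ZMod.card]

/-- Over `GF(7)` the quadric `exForm = 0` contains the standard normal rational curve,
but for every `τ ∈ GF(49) \ GF(7)` the extended curve point at `τ` is not on the
extended quadric (its value is `τ⁷ − τ ≠ 0`): the bound `q > 7` in the quadric-extension
lemma is tight. -/
theorem statement_14 {K : Type} [Field K] [Fintype K] [Algebra (ZMod 7) K]
    (hK : Fintype.card K = 49) :
    (∀ θ : ZMod 7, exForm ![1, θ, θ ^ 2, θ ^ 3, θ ^ 4] = 0) ∧
    exForm (![0, 0, 0, 0, 1] : Fin 5 → ZMod 7) = 0 ∧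
    (∀ t : K, t ∉ Set.range (algebraMap (ZMod 7) K) →
      exForm ![1, t, t ^ 2, t ^ 3, t ^ 4] = t ^ 7 - t ∧ t ^ 7 - t ≠ 0) :=
  statement_14_general

end BaerConics
end
end
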